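/- Let A be a (not necessarily associative) unital F-algebra with dim A = n > 2. Then l(A) ≤ 2^{n−2}, where l(A) is the maximum of l(S) over all finite generating sets S of A. -/
import Mathlib


/-- Words in a finite subset `S` of a (not necessarily associative) unital algebra:
`IsWord S n a` means `a` is a product (with some bracketing) of `n` elements of `S`,
where `1` is the unique word of length `0`. -/
inductive IsWord {A : Type*} [NonAssocRing A] (S : Set A) : ℕ → A → Prop
  | one : IsWord S 0 1
  | base : ∀ a, a ∈ S → IsWord S 1 a
  | mul : ∀ {m n : ℕ} {a b : A}, 0 < m → 0 < n → IsWord S m a → IsWord S n b →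
      IsWord S (m + n) (a * b)

/-- `Lspan F S k` is the `F`-linear span of all words in `S` of length at most `k`. -/
def Lspan (F : Type*) {A : Type*} [Field F] [NonAssocRing A] [Module F A]
    (S : Set A) (k : ℕ) : Submodule F A :=
  Submodule.span F {a | ∃ m ≤ k, IsWord S m a}

/-- `S` generates the algebra `A` iff the union of all the `Lspan F S k` is all of `A`. -/
def Generates (F : Type*) {A : Type*} [Field F] [NonAssocRing A] [Module F A]
    (S : Set A) : Prop :=
  (⨆ k, Lspan F S k) = ⊤

/-- The length of a generating set: the least `k` with `Lspan F S k = ⊤`. -/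
noncomputable def len (F : Type*) {A : Type*} [Field F] [NonAssocRing A] [Module F A]
    (S : Set A) : ℕ :=
  sInf {k | Lspan F S k = ⊤}

/-- The length of the algebra: the maximum of `len F S` over all finite generating sets. -/
noncomputable def algLen (F : Type*) (A : Type*) [Field F] [NonAssocRing A] [Module F A] : ℕ :=
  sSup {l | ∃ S : Set A, S.Finite ∧ Generates F S ∧ len F S = l}

/-- `w` is a fresh word of length `n` in `S`: a word of length `n` lying in no `Lspan F S m`
for `m < n`. -/
def Fresh (F : Type*) {A : Type*} [Field F] [NonAssocRing A] [Module F A]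
    (S : Set A) (n : ℕ) (w : A) : Prop :=
  IsWord S n w ∧ ∀ m < n, w ∉ Lspan F S m

/-- `(m 0, m 1, …, m N)` is the characteristic sequence of `S`: a non-decreasing sequence
with `m 0 = 0` in which each `k ≥ 1` occurs exactly
`dim Lspan F S k − dim Lspan F S (k-1)` times. -/
def IsCharSeq (F : Type*) {A : Type*} [Field F] [NonAssocRing A] [Module F A]
    (S : Set A) (N : ℕ) (m : ℕ → ℕ) : Prop :=
  m 0 = 0 ∧ (∀ i j, i ≤ j → j ≤ N → m i ≤ m j) ∧
  (∀ t, 1 ≤ t → t ≤ N → 1 ≤ m t) ∧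
  ∀ k, 1 ≤ k →
    ((Finset.range (N + 1)).filter (fun t => m t = k)).card
      = Module.finrank F (Lspan F S k) - Module.finrank F (Lspan F S (k - 1))

section Aux

variable {F A : Type*} [Field F] [NonAssocRing A] [Module F A] (S : Set A)

lemma isWord_eq_one {a : A} {m : ℕ} (h : IsWord S m a) (hm : m = 0) : a = 1 := by
  induction h with
  | one => rfl
  | base a ha => omega
  | mul h1 h2 _ _ _ _ => omega

lemma isWord_zero {a : A} (h : IsWord S 0 a) : a = 1 := isWord_eq_one S h rfl

lemma word_mem_Lspan {a : A} {m k : ℕ} (h : IsWord S m a) (hmk : m ≤ k) :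
    a ∈ Lspan F S k :=
  Submodule.subset_span ⟨m, hmk, h⟩

lemma Lspan_mono {k l : ℕ} (h : k ≤ l) : Lspan F S k ≤ Lspan F S l :=
  Submodule.span_mono fun a ⟨m, hm, hw⟩ => ⟨m, hm.trans h, hw⟩

variable [SMulCommClass F A A] [IsScalarTower F A A]

lemma Lspan_mul_mem {k l : ℕ} {u v : A} (hu : u ∈ Lspan F S k) (hv : v ∈ Lspan F S l) :
    u * v ∈ Lspan F S (k + l) := by
  induction hu using Submodule.span_induction with
  | mem x hx =>
    obtain ⟨m, hmk, hw⟩ := hx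
    induction hv using Submodule.span_induction with
    | mem y hy =>
      obtain ⟨p, hpl, hwp⟩ := hy
      rcases Nat.eq_zero_or_pos m with hm | hm
      · subst hm
        rw [isWord_zero S hw, one_mul]
        exact word_mem_Lspan S hwp (hpl.trans (Nat.le_add_left l k))
      rcases Nat.eq_zero_or_pos p with hp | hp
      · subst hp
        rw [isWord_zero S hwp, mul_one]
        exact word_mem_Lspan S hw (hmk.trans (Nat.le_add_right k l))
      exact word_mem_Lspan S (IsWord.mul hm hp hw hwp) (by omega)
    | zero => rw [mul_zero]; exact zero_mem _
    | add y z _ _ hy hz => rw [mul_add]; exact add_mem hy hz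
    | smul c y _ hy => rw [mul_smul_comm]; exact Submodule.smul_mem _ _ hy
  | zero => rw [zero_mul]; exact zero_mem _
  | add x y _ _ hx hy => rw [add_mul]; exact add_mem hx hy
  | smul c x _ hx => rw [smul_mul_assoc]; exact Submodule.smul_mem _ _ hx

/-- Stabilization: if `Lspan (2k) ≤ Lspan k` for some `k ≥ 1`, every word is in `Lspan k`. -/
lemma stab {k : ℕ} (hk : 1 ≤ k) (h : Lspan F S (2 * k) ≤ Lspan F S k)
    {m : ℕ} {w : A} (hw : IsWord S m w) : w ∈ Lspan F S k := by
  induction hw with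
  | one => exact word_mem_Lspan S IsWord.one (Nat.zero_le k)
  | base a ha => exact word_mem_Lspan S (IsWord.base a ha) hk
  | mul hm hn _ _ iha ihb =>
    exact h (by simpa [two_mul] using Lspan_mul_mem S iha ihb)

lemma stab_top {k : ℕ} (hk : 1 ≤ k) (hgen : Generates F S)
    (h : Lspan F S (2 * k) ≤ Lspan F S k) : Lspan F S k = ⊤ := by
  have : (⨆ m, Lspan F S m) ≤ Lspan F S k := by
    refine iSup_le fun m => ?_
    rw [Lspan, Submodule.span_le]
    rintro a ⟨p, _, hw⟩
    exact stab S hk h hw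
  exact top_le_iff.mp (hgen ▸ this)

end Aux

theorem stmt_11 (F : Type*) (A : Type*) [Field F] [NonAssocRing A] [Module F A]
    [SMulCommClass F A A] [IsScalarTower F A A] [FiniteDimensional F A]
    (n : ℕ) (hdim : Module.finrank F A = n) (hn : 2 < n) :
    algLen F A ≤ 2 ^ (n - 2) := by
  have hA : Nontrivial A := Module.nontrivial_of_finrank_pos (R := F) (by omega)
  have key : ∀ S : Set A, Generates F S → Lspan F S (2 ^ (n - 2)) = ⊤ := by
    intro S hgen
    have claim : ∀ j, min n (j + 2) ≤ Module.finrank F (Lspan F S (2 ^ j)) := by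
      intro j
      induction j with
      | zero =>
        by_contra hcon
        push_neg at hcon
        have hcon2 : Module.finrank F (Lspan F S 1) < 2 := by
          have : min n 2 = 2 := by omega
          simpa [this] using hcon
        have h1 : (1 : A) ∈ Lspan F S 0 := word_mem_Lspan S IsWord.one le_rfl
        have hpos : 0 < Module.finrank F (Lspan F S 0) := by
          rw [Module.finrank_pos_iff]
          exact ⟨⟨1, h1⟩, 0, fun h => one_ne_zero (α := A)
            (by simpa using congrArg Subtype.val h)⟩
        have h01 : Lspan F S 0 = Lspan F S 1 := by
          apply Submodule.eq_of_le_of_finrank_le (Lspan_mono S (by omega))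
          have := Submodule.finrank_mono (M := A) (Lspan_mono (F := F) S (Nat.zero_le 1))
          omega
        have h21 : Lspan F S (2 * 1) ≤ Lspan F S 1 := by
          rw [Lspan, Submodule.span_le]
          rintro a ⟨m, hm, hw⟩
          cases hw with
          | one => exact word_mem_Lspan S IsWord.one (by omega)
          | base a ha => exact word_mem_Lspan S (IsWord.base a ha) le_rfl
          | @mul p q u v hp hq hu hv =>
            have hp1 : p = 1 := by omega
            have hq1 : q = 1 := by omega
            subst hp1; subst hq1
            have hu' : u ∈ Lspan F S 0 := h01 ▸ word_mem_Lspan S hu le_rfl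
            have hv' : v ∈ Lspan F S 0 := h01 ▸ word_mem_Lspan S hv le_rfl
            have := Lspan_mul_mem S hu' hv'
            rw [← h01]
            simpa using this
        have htop := stab_top S le_rfl hgen h21
        rw [htop, finrank_top, hdim] at hcon2
        omega
      | succ j ih =>
        have hle2 : (2 : ℕ) ^ j ≤ 2 ^ (j + 1) := Nat.pow_le_pow_right (by omega) (by omega)
        by_cases htop : Lspan F S (2 ^ j) = ⊤
        · have : Lspan F S (2 ^ (j + 1)) = ⊤ :=
            top_le_iff.mp (htop ▸ Lspan_mono S hle2)
          rw [this, finrank_top, hdim]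
          omega
        · by_cases hle : Lspan F S (2 ^ (j + 1)) ≤ Lspan F S (2 ^ j)
          · exfalso
            apply htop
            apply stab_top S Nat.one_le_two_pow hgen
            have h2 : 2 * 2 ^ j = 2 ^ (j + 1) := by rw [pow_succ, Nat.mul_comm]
            rwa [h2]
          · have hlt : Lspan F S (2 ^ j) < Lspan F S (2 ^ (j + 1)) :=
              lt_of_le_of_ne (Lspan_mono S hle2) (fun he => hle he.ge)
            have h1 := Submodule.finrank_lt_finrank_of_lt hlt
            have h2 : Module.finrank F (Lspan F S (2 ^ (j + 1))) ≤ n :=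
              hdim ▸ Submodule.finrank_le _
            omega
    have hfin := claim (n - 2)
    have hmin : min n (n - 2 + 2) = n := by omega
    rw [hmin] at hfin
    exact Submodule.eq_top_of_finrank_eq
      (le_antisymm (hdim ▸ Submodule.finrank_le _) (hdim ▸ hfin))
  have hub : (2 : ℕ) ^ (n - 2) ∈
      upperBounds {l | ∃ S : Set A, S.Finite ∧ Generates F S ∧ len F S = l} := by
    rintro l ⟨S, -, hgen, rfl⟩
    exact Nat.sInf_le (key S hgen)
  exact csSup_le' hub
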